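/- Let n ≥ 1 and let a ∈ so(n+2) be the matrix with a_{12} = −1, a_{21} = 1 and all other entries zero. For smooth X = (x_1,…,x_n), Y = (y_1,…,y_n) : ℝ² → ℝⁿ, let u : ℝ² → so(n+2) be the matrix whose first row is (0, 0, x_1,…,x_n), whose second row is (0, 0, y_1,…,y_n), and whose i-th row for 3 ≤ i ≤ n+2 is (−x_{i−2}, −y_{i−2}, 0,…,0). Then u satisfies u_t = [a, u_xx] − (1/2)[u, [u, [a, u]]] if and only if X_t = −Y_xx + (X·Y) X − (1/2)(3 X·X + Y·Y) Y and Y_t = X_xx + (1/2)(X·X + 3 Y·Y) X − (X·Y) Y, where X·Y denotes the standard inner product on ℝⁿ. -/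

import Mathlib

open Matrix
open scoped ContDiff

attribute [local instance] Matrix.frobeniusNormedAddCommGroup Matrix.frobeniusNormedSpace


def Wmat (n : ℕ) (f g : Fin n → ℝ) : Matrix (Fin 2 ⊕ Fin n) (Fin 2 ⊕ Fin n) ℝ :=
  Matrix.fromBlocks 0
    (Matrix.of fun i j => if i = (0 : Fin 2) then f j else g j)
    (-(Matrix.of fun i j => if i = (0 : Fin 2) then f j else g j)ᵀ) 0

lemma hb3 (n : ℕ) (f g : Fin n → ℝ) :
    Wmat n f g * Matrix.fromBlocks
          ((∑ i, f i * f i + ∑ i, g i * g i) • (!![0, -1; 1, 0] : Matrix (Fin 2) (Fin 2) ℝ))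
          0 0 (Matrix.of fun j l => 2 * (f j * g l - g j * f l))
      - Matrix.fromBlocks
          ((∑ i, f i * f i + ∑ i, g i * g i) • (!![0, -1; 1, 0] : Matrix (Fin 2) (Fin 2) ℝ))
          0 0 (Matrix.of fun j l => 2 * (f j * g l - g j * f l)) * Wmat n f g
      = Wmat n
          (fun l => -2 * (∑ i, f i * g i) * f l
            + (3 * (∑ i, f i * f i) + ∑ i, g i * g i) * g l)
          (fun l => -((∑ i, f i * f i) + 3 * (∑ i, g i * g i)) * f l
            + 2 * (∑ i, f i * g i) * g l) := by
  ext i j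
  rcases i with i | i <;> rcases j with j | j <;>
    simp [Wmat, Matrix.mul_apply, Fintype.sum_sum_type, Fin.sum_univ_two,
      Matrix.fromBlocks, Finset.sum_mul, Finset.mul_sum, mul_comm]
  all_goals
    have hlp : ∀ (a b c : Fin n → ℝ) (e k : ℝ),
        ∑ x, a x * ((b x * e - k * c x) * 2)
          = e * 2 * ∑ x, a x * b x - k * 2 * ∑ x, a x * c x := by
      intros a b c e k
      rw [Finset.mul_sum, Finset.mul_sum, ← Finset.sum_sub_distrib]
      exact Finset.sum_congr rfl fun x _ => by ring
    have hlp2 : ∀ (a b : Fin n → ℝ) (c : ℝ),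
        ∑ x, c * (a x * b x * 2) = c * 2 * ∑ x, a x * b x := by
      intros a b c
      rw [Finset.mul_sum]
      exact Finset.sum_congr rfl fun x _ => by ring
    have h3 : ∀ (a b c : Fin n → ℝ) (e k : ℝ),
        ∑ x, a x * (e * b x - c x * k) * 2
          = e * 2 * ∑ x, a x * b x - k * 2 * ∑ x, a x * c x := by
      intros a b c e k
      rw [Finset.mul_sum, Finset.mul_sum, ← Finset.sum_sub_distrib]
      exact Finset.sum_congr rfl fun x _ => by ring
    have hsq : ∀ a : Fin n → ℝ, ∑ x, a x ^ 2 = ∑ x, a x * a x :=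
      fun a => Finset.sum_congr rfl fun x _ => by ring
    have hc3 : ∀ (a b : Fin n → ℝ), ∑ x, a x * b x * (3 : ℝ) = 3 * ∑ x, a x * b x := by
      intros a b
      rw [Finset.mul_sum]
      exact Finset.sum_congr rfl fun x _ => by ring
    have hgf : ∑ x, g x * f x = ∑ x, f x * g x :=
      Finset.sum_congr rfl fun x _ => mul_comm _ _
    have h4 : ∀ (a b c : Fin n → ℝ) (e k : ℝ),
        ∑ x, a x * ((e * b x - c x * k) * 2)
          = e * 2 * ∑ x, a x * b x - k * 2 * ∑ x, a x * c x := by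
      intros a b c e k
      rw [Finset.mul_sum, Finset.mul_sum, ← Finset.sum_sub_distrib]
      exact Finset.sum_congr rfl fun x _ => by ring
    first
      | fin_cases i <;> simp <;> simp only [hlp, hlp2, h3, h4, hsq, hc3, hgf] <;> ring
      | fin_cases j <;> simp <;> simp only [hlp, hlp2, h3, h4, hsq, hc3, hgf] <;> ring

def Amat (n : ℕ) : Matrix (Fin 2 ⊕ Fin n) (Fin 2 ⊕ Fin n) ℝ :=
  Matrix.fromBlocks !![0, -1; 1, 0] 0 0 0

lemma hb1 (n : ℕ) (f g : Fin n → ℝ) :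
    Amat n * Wmat n f g - Wmat n f g * Amat n = Wmat n (-g) f := by
  ext i j
  rcases i with i | i <;> rcases j with j | j <;>
    simp [Amat, Wmat, Matrix.mul_apply, Fintype.sum_sum_type, Fin.sum_univ_two,
      Matrix.fromBlocks]
  · fin_cases i <;> simp
  · fin_cases j <;> simp

lemma hb2 (n : ℕ) (f g : Fin n → ℝ) :
    Wmat n f g * Wmat n (-g) f - Wmat n (-g) f * Wmat n f g
      = Matrix.fromBlocks
          ((∑ i, f i * f i + ∑ i, g i * g i) • (!![0, -1; 1, 0] : Matrix (Fin 2) (Fin 2) ℝ))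
          0 0 (Matrix.of fun j l => 2 * (f j * g l - g j * f l)) := by
  ext i j
  rcases i with i | i <;> rcases j with j | j <;>
    simp [Wmat, Matrix.mul_apply, Fintype.sum_sum_type, Fin.sum_univ_two,
      Matrix.fromBlocks]
  · fin_cases i <;> fin_cases j <;>
      simp [Finset.sum_add_distrib, mul_comm] <;>
      first
        | ring
        | (ring_nf; simp only [pow_two]; ring)
  · ring


lemma Wmat_sub_smul (n : ℕ) (a b F G : Fin n → ℝ) (c : ℝ) :
    Wmat n a b - c • Wmat n F G = Wmat n (a - c • F) (b - c • G) := by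
  ext i j
  rcases i with i | i <;> rcases j with j | j <;>
    simp [Wmat, Matrix.fromBlocks] <;>
    split <;> simp [mul_comm] <;> ring

lemma Wmat_inj (n : ℕ) (a b c d : Fin n → ℝ) :
    Wmat n a b = Wmat n c d ↔ a = c ∧ b = d := by
  constructor
  · intro h
    constructor <;> funext j
    · have := congrFun (congrFun h (Sum.inl 0)) (Sum.inr j)
      simpa [Wmat] using this
    · have := congrFun (congrFun h (Sum.inl 1)) (Sum.inr j)
      simpa [Wmat] using this
  · rintro ⟨rfl, rfl⟩; rfl

lemma key_alg (n : ℕ) (Xv Yv Xt Yt dXx dYx : Fin n → ℝ) :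
    (Wmat n Xt Yt
      = (Amat n * Wmat n dXx dYx - Wmat n dXx dYx * Amat n)
        - (1 / 2 : ℝ) • (Wmat n Xv Yv * (Wmat n Xv Yv * (Amat n * Wmat n Xv Yv - Wmat n Xv Yv * Amat n)
              - (Amat n * Wmat n Xv Yv - Wmat n Xv Yv * Amat n) * Wmat n Xv Yv)
            - (Wmat n Xv Yv * (Amat n * Wmat n Xv Yv - Wmat n Xv Yv * Amat n)
              - (Amat n * Wmat n Xv Yv - Wmat n Xv Yv * Amat n) * Wmat n Xv Yv) * Wmat n Xv Yv))
    ↔ (Xt = -dYx + (∑ i, Xv i * Yv i) • Xv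
           - ((1 / 2 : ℝ) * (3 * ∑ i, Xv i * Xv i + ∑ i, Yv i * Yv i)) • Yv
        ∧ Yt = dXx + ((1 / 2 : ℝ) * (∑ i, Xv i * Xv i + 3 * ∑ i, Yv i * Yv i)) • Xv
           - (∑ i, Xv i * Yv i) • Yv) := by
  rw [hb1 n dXx dYx, hb1 n Xv Yv, hb2 n Xv Yv, hb3 n Xv Yv, Wmat_sub_smul, Wmat_inj]
  constructor <;> rintro ⟨h1, h2⟩ <;> constructor <;>
    (first
      | (rw [h1]; funext l; simp [Pi.smul_apply]; ring)
      | (rw [h2]; funext l; simp [Pi.smul_apply]; ring))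

noncomputable def WmatL (n : ℕ) :
    ((Fin n → ℝ) × (Fin n → ℝ)) →L[ℝ] Matrix (Fin 2 ⊕ Fin n) (Fin 2 ⊕ Fin n) ℝ :=
  LinearMap.toContinuousLinearMap
    { toFun := fun p => Wmat n p.1 p.2
      map_add' := by
        intro p q
        ext i j
        rcases i with i | i <;> rcases j with j | j <;>
          simp [Wmat, Matrix.fromBlocks] <;> split <;> simp <;> ring
      map_smul' := by
        intro c p
        ext i j
        rcases i with i | i <;> rcases j with j | j <;>
          simp [Wmat, Matrix.fromBlocks] <;> split <;> simp }

lemma hasDerivAt_Wmat {n : ℕ} {f g : ℝ → Fin n → ℝ} {f' g' : Fin n → ℝ} {t : ℝ}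
    (hf : HasDerivAt f f' t) (hg : HasDerivAt g g' t) :
    HasDerivAt (fun s => Wmat n (f s) (g s)) (Wmat n f' g') t := by
  have h := ((WmatL n).hasFDerivAt.comp_hasDerivAt t (hf.prodMk hg))
  exact h

lemma deriv_Wmat {n : ℕ} {f g : ℝ → Fin n → ℝ} {t : ℝ}
    (hf : DifferentiableAt ℝ f t) (hg : DifferentiableAt ℝ g t) :
    deriv (fun s => Wmat n (f s) (g s)) t = Wmat n (deriv f t) (deriv g t) :=
  (hasDerivAt_Wmat hf.hasDerivAt hg.hasDerivAt).deriv


/-- Let `n ≥ 1` and let `a ∈ so(n+2)` have `a₁₂ = −1`, `a₂₁ = 1` and zeros elsewhere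
(in block form `a = [[J,0],[0,0]]` with `J = [[0,−1],[1,0]]`).  For smooth
`X, Y : ℝ² → ℝⁿ` let `u ∈ so(n+2)` be the matrix with first row `(0,0,X)`, second row
`(0,0,Y)` and `i`-th row `(−x_{i−2}, −y_{i−2}, 0, …, 0)` for `i ≥ 3`, i.e.
`u = [[0, W],[−Wᵀ, 0]]` with `W` the `2 × n` matrix with rows `X` and `Y`.  Then
`u_t = [a, u_xx] − (1/2)[u,[u,[a,u]]]` iff
`X_t = −Y_xx + (X·Y) X − (1/2)(3 X·X + Y·Y) Y` and
`Y_t = X_xx + (1/2)(X·X + 3 Y·Y) X − (X·Y) Y`. -/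
theorem stmt_5 (n : ℕ) (hn : 1 ≤ n)
    (a : Matrix (Fin 2 ⊕ Fin n) (Fin 2 ⊕ Fin n) ℝ)
    (ha : a = Matrix.fromBlocks !![0, -1; 1, 0] 0 0 0)
    (X Y : ℝ → ℝ → (Fin n → ℝ))
    (hX : ContDiff ℝ ∞ (Function.uncurry X))
    (hY : ContDiff ℝ ∞ (Function.uncurry Y))
    (u : ℝ → ℝ → Matrix (Fin 2 ⊕ Fin n) (Fin 2 ⊕ Fin n) ℝ)
    (hu : ∀ x t : ℝ, u x t
      = Matrix.fromBlocks 0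
          (Matrix.of fun i j => if i = (0 : Fin 2) then X x t j else Y x t j)
          (-(Matrix.of fun i j => if i = (0 : Fin 2) then X x t j else Y x t j)ᵀ) 0) :
    (∀ x t : ℝ,
        deriv (fun s => u x s) t
          = (a * deriv (fun s => deriv (fun s' => u s' t) s) x
              - deriv (fun s => deriv (fun s' => u s' t) s) x * a)
            - (1 / 2 : ℝ) • (u x t * (u x t * (a * u x t - u x t * a)
                  - (a * u x t - u x t * a) * u x t)
                - (u x t * (a * u x t - u x t * a)
                  - (a * u x t - u x t * a) * u x t) * u x t))
      ↔ (∀ x t : ℝ,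
          deriv (fun s => X x s) t
            = -(deriv (fun s => deriv (fun s' => Y s' t) s) x)
              + (∑ i, X x t i * Y x t i) • X x t
              - ((1 / 2 : ℝ) * (3 * ∑ i, X x t i * X x t i + ∑ i, Y x t i * Y x t i))
                  • Y x t ∧
          deriv (fun s => Y x s) t
            = deriv (fun s => deriv (fun s' => X s' t) s) x
              + ((1 / 2 : ℝ) * (∑ i, X x t i * X x t i + 3 * ∑ i, Y x t i * Y x t i))
                  • X x t
              - (∑ i, X x t i * Y x t i) • Y x t) := by
  refine forall₂_congr fun x t => ?_
  -- smoothness of slices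
  have hXt : ContDiff ℝ ∞ fun s => X x s := hX.comp (contDiff_const.prodMk contDiff_id)
  have hYt : ContDiff ℝ ∞ fun s => Y x s := hY.comp (contDiff_const.prodMk contDiff_id)
  have hXs : ContDiff ℝ ∞ fun s' => X s' t := hX.comp (contDiff_id.prodMk contDiff_const)
  have hYs : ContDiff ℝ ∞ fun s' => Y s' t := hY.comp (contDiff_id.prodMk contDiff_const)
  have hdX : ContDiff ℝ ∞ (deriv fun s' => X s' t) := (contDiff_infty_iff_deriv.mp hXs).2
  have hdY : ContDiff ℝ ∞ (deriv fun s' => Y s' t) := (contDiff_infty_iff_deriv.mp hYs).2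
  have hux : (fun s => u x s) = fun s => Wmat n (X x s) (Y x s) := funext fun s => hu x s
  have h1 : deriv (fun s => u x s) t
      = Wmat n (deriv (fun s => X x s) t) (deriv (fun s => Y x s) t) := by
    rw [hux]
    exact deriv_Wmat (hXt.differentiable (by norm_num) t) (hYt.differentiable (by norm_num) t)
  have e2 : (fun s => deriv (fun s' => u s' t) s)
      = fun s => Wmat n (deriv (fun s' => X s' t) s) (deriv (fun s' => Y s' t) s) := by
    funext s
    have : (fun s' => u s' t) = fun s' => Wmat n (X s' t) (Y s' t) := funext fun s' => hu s' t
    rw [this]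
    exact deriv_Wmat (hXs.differentiable (by norm_num) s) (hYs.differentiable (by norm_num) s)
  have h2 : deriv (fun s => deriv (fun s' => u s' t) s) x
      = Wmat n (deriv (fun s => deriv (fun s' => X s' t) s) x)
          (deriv (fun s => deriv (fun s' => Y s' t) s) x) := by
    rw [e2]
    exact deriv_Wmat (hdX.differentiable (by norm_num) x) (hdY.differentiable (by norm_num) x)
  have hA : a = Amat n := ha
  have huxt : u x t = Wmat n (X x t) (Y x t) := hu x t
  rw [h1, h2, hA, huxt]
  exact key_alg n (X x t) (Y x t) _ _ _ _
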